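/- Consider the (C[0,1])²-valued ODE system d/dt ρ₁(t,u) = -ψ(u)ρ₁(t,u) + ρ₀(t,u)∫₀¹λ(u,v)ρ₁(t,v)dv, d/dt ρ₀(t,u) = -ρ₀(t,u)∫₀¹λ(u,v)ρ₁(t,v)dv with initial conditions ρ₁(0,·) = φ and ρ₀(0,·) = 1 - φ where 0 ≤ φ(u) ≤ 1. Then any solution satisfies 0 ≤ ρ₀(t,u), ρ₁(t,u) and ρ₀(t,u) + ρ₁(t,u) ≤ 1 for all t ≥ 0 and u ∈ [0,1]. -/

import Mathlib

open MeasureTheory Real Set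

open Filter Topology Function

/-!
Nonnegativity comes from a minimum principle on `[0, T] × [0, 1]`: a function whose time
derivative is at least `K` times its value wherever it attains a negative spatial minimum
cannot become negative. For `ρ₀` this holds because `ρ₀' = -ρ₀ · ∫ Λ ρ₁` with a bounded
coefficient; once `ρ₀ ≥ 0` is known, the gain term `ρ₀ ∫ Λ ρ₁` is at least `ρ₀ · L · min ρ₁`
since `Λ > 0`, so it holds for `ρ₁` as well. Finally `(ρ₀ + ρ₁)' = -ψ ρ₁ ≤ 0`.
-/

theorem HasDerivAt.nonpos_of_eventually_le_left {f : ℝ → ℝ} {d c : ℝ} (hf : HasDerivAt f d c)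
    (h : ∀ᶠ t in 𝓝[<] c, f c ≤ f t) : d ≤ 0 := by
  refine le_of_tendsto ((hasDerivAt_iff_tendsto_slope.1 hf).mono_left (nhdsLT_le_nhdsNE c)) ?_
  filter_upwards [h, self_mem_nhdsWithin] with t hle (hlt : t < c)
  rw [slope_def_field]
  exact div_nonpos_of_nonneg_of_nonpos (sub_nonneg.2 hle) (sub_nonpos.2 hlt.le)

section MinimumPrinciple

variable {X : Type*} [TopologicalSpace X] {s : Set X} {T : ℝ}

/-- If `G` could vanish on `[0, T] × s`, take the earliest such time `c` and a point `w` where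
`G c w = 0`; then `G c ·` is still nonnegative, so `∂ₜG (c, w) > 0`, while `G (·, w)` decreases
to `0` from the left. -/
theorem pos_of_hasDerivAt_pos_of_eq_zero (hs : IsCompact s) {G D : ℝ → X → ℝ}
    (hG : ContinuousOn (uncurry G) (Icc 0 T ×ˢ s)) (hG₀ : ∀ x ∈ s, 0 < G 0 x)
    (hD : ∀ t ∈ Ioc 0 T, ∀ x ∈ s, HasDerivAt (G · x) (D t x) t)
    (hDpos : ∀ t ∈ Ioc 0 T, ∀ x ∈ s, G t x = 0 → (∀ y ∈ s, 0 ≤ G t y) → 0 < D t x) :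
    ∀ t ∈ Icc 0 T, ∀ x ∈ s, 0 < G t x := by
  by_contra! ⟨t₀, ht₀, x₀, hx₀, hG₀neg⟩
  obtain ⟨⟨c, w⟩, ⟨⟨hc, hw⟩, hcw⟩, hmin⟩ :=
    (hG.lowerSemicontinuousOn.isCompact_inter_preimage_Iic (isCompact_Icc.prod hs) 0).exists_isMinOn
      ⟨(t₀, x₀), ⟨ht₀, hx₀⟩, hG₀neg⟩ continuous_fst.continuousOn
  simp only [mem_preimage, uncurry_apply_pair, mem_Iic] at hc hw hcw
  have hc₀ : 0 < c := hc.1.lt_of_ne fun h => by subst h; exact (hG₀ w hw).not_ge hcw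
  have hbefore : ∀ t ∈ Ico 0 c, ∀ x ∈ s, 0 < G t x := fun t ht x hx => by
    by_contra! hle
    exact ht.2.not_ge (isMinOn_iff.1 hmin (t, x) ⟨⟨⟨ht.1, ht.2.le.trans hc.2⟩, hx⟩, hle⟩)
  have hleft : ∀ᶠ t in 𝓝[<] c, t ∈ Ico 0 c :=
    mem_of_superset (Ioo_mem_nhdsLT hc₀) Ioo_subset_Ico_self
  have hat : ∀ x ∈ s, 0 ≤ G c x := fun x hx =>
    ge_of_tendsto ((hD c ⟨hc₀, hc.2⟩ x hx).continuousAt.tendsto.mono_left nhdsWithin_le_nhds)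
      (hleft.mono fun t ht => (hbefore t ht x hx).le)
  have hzero : G c w = 0 := le_antisymm hcw (hat w hw)
  refine (hDpos c ⟨hc₀, hc.2⟩ w hw hzero hat).not_ge
    ((hD c ⟨hc₀, hc.2⟩ w hw).nonpos_of_eventually_le_left ?_)
  exact hleft.mono fun t ht => hzero ▸ (hbefore t ht w hw).le

/-- `F + ε e^{(K+1)t}` satisfies the strict hypothesis of `pos_of_hasDerivAt_pos_of_eq_zero`. -/
theorem nonneg_of_hasDerivAt_ge_mul_of_isMinOn (hs : IsCompact s) {F D : ℝ → X → ℝ} {K : ℝ}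
    (hF : ContinuousOn (uncurry F) (Icc 0 T ×ˢ s)) (hF₀ : ∀ x ∈ s, 0 ≤ F 0 x)
    (hD : ∀ t ∈ Ioc 0 T, ∀ x ∈ s, HasDerivAt (F · x) (D t x) t)
    (hK : ∀ t ∈ Ioc 0 T, ∀ x ∈ s, F t x < 0 → IsMinOn (F t) s x → K * F t x ≤ D t x) :
    ∀ t ∈ Icc 0 T, ∀ x ∈ s, 0 ≤ F t x := by
  intro t₀ ht₀ x₀ hx₀
  by_contra! hneg
  set ε := -F t₀ x₀ * exp (-((K + 1) * t₀))
  have hε : 0 < ε := mul_pos (neg_pos.2 hneg) (exp_pos _)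
  have hpos := pos_of_hasDerivAt_pos_of_eq_zero hs (G := fun t x => F t x + ε * exp ((K + 1) * t))
    (D := fun t x => D t x + ε * (exp ((K + 1) * t) * ((K + 1) * 1)))
    (hF.add (by fun_prop)) (fun x hx => by simpa using add_pos_of_nonneg_of_pos (hF₀ x hx) hε)
    (fun t ht x hx => (hD t ht x hx).add (((hasDerivAt_id t).const_mul _).exp.const_mul ε))
    (fun t ht x hx hzero hmin => by
      have hE : 0 < ε * exp ((K + 1) * t) := mul_pos hε (exp_pos _)
      have hFt : F t x = -(ε * exp ((K + 1) * t)) := by linarith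
      have hKF := hK t ht x hx (by linarith) (isMinOn_iff.2 fun y hy => by linarith [hmin y hy])
      rw [hFt] at hKF
      linarith)
    t₀ ht₀ x₀ hx₀
  simp only [ε, mul_assoc, ← exp_add, neg_mul, neg_add_cancel, exp_zero, mul_one] at hpos
  linarith

theorem nonneg_of_hasDerivAt_eq_neg_mul (hs : IsCompact s) {F a : ℝ → X → ℝ} {K : ℝ}
    (hF : ContinuousOn (uncurry F) (Icc 0 T ×ˢ s)) (hF₀ : ∀ x ∈ s, 0 ≤ F 0 x)
    (ha : ∀ t ∈ Ioc 0 T, ∀ x ∈ s, |a t x| ≤ K)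
    (hD : ∀ t ∈ Ioc 0 T, ∀ x ∈ s, HasDerivAt (F · x) (-F t x * a t x) t) :
    ∀ t ∈ Icc 0 T, ∀ x ∈ s, 0 ≤ F t x :=
  nonneg_of_hasDerivAt_ge_mul_of_isMinOn hs hF hF₀ hD fun t ht x hx hneg _ => by
    nlinarith [(abs_le.1 (ha t ht x hx)).1]

end MinimumPrinciple

theorem antitoneOn_Icc_of_hasDerivAt_nonpos {f f' : ℝ → ℝ} {a b : ℝ}
    (hf : ∀ t ∈ Icc a b, HasDerivAt f (f' t) t) (hf' : ∀ t ∈ Ioo a b, f' t ≤ 0) :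
    AntitoneOn f (Icc a b) :=
  antitoneOn_of_hasDerivWithinAt_nonpos (convex_Icc a b)
    (fun t ht => (hf t ht).continuousAt.continuousWithinAt)
    (by rw [interior_Icc]; exact fun t ht => (hf t (Ioo_subset_Icc_self ht)).hasDerivWithinAt)
    (by rwa [interior_Icc])

theorem exists_abs_integral_mul_le {Λ ρ : ℝ → ℝ → ℝ} {T : ℝ}
    (hΛ : ContinuousOn (uncurry Λ) (Icc 0 1 ×ˢ Icc 0 1))
    (hρ : ContinuousOn (uncurry ρ) (Icc 0 T ×ˢ Icc 0 1)) :
    ∃ K, ∀ t ∈ Icc 0 T, ∀ u ∈ Icc (0:ℝ) 1, |∫ v in (0:ℝ)..1, Λ u v * ρ t v| ≤ K := by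
  obtain ⟨L, hL⟩ := (isCompact_Icc.prod isCompact_Icc).exists_bound_of_continuousOn hΛ
  obtain ⟨M, hM⟩ := (isCompact_Icc.prod isCompact_Icc).exists_bound_of_continuousOn hρ
  refine ⟨L * M, fun t ht u hu => ?_⟩
  have hbound : ∀ v ∈ Ioc (0:ℝ) 1, ‖Λ u v * ρ t v‖ ≤ L * M := fun v hv => by
    have hL' := hL (u, v) ⟨hu, Ioc_subset_Icc_self hv⟩
    rw [norm_mul]
    exact mul_le_mul hL' (hM (t, v) ⟨ht, Ioc_subset_Icc_self hv⟩) (norm_nonneg _)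
      ((norm_nonneg _).trans hL')
  have h := intervalIntegral.norm_integral_le_of_norm_le_const (a := 0) (b := 1)
    fun v hv => hbound v (by rwa [uIoc_of_le zero_le_one] at hv)
  rwa [Real.norm_eq_abs, sub_zero, abs_one, mul_one] at h

theorem nonneg_of_hasDerivAt_eq_neg_mul_add_mul_integral {ψ : ℝ → ℝ} {Λ b ρ : ℝ → ℝ → ℝ}
    {T M : ℝ} (hψ : ∀ u ∈ Icc (0:ℝ) 1, 0 ≤ ψ u)
    (hΛc : ContinuousOn (uncurry Λ) (Icc 0 1 ×ˢ Icc 0 1))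
    (hΛ : ∀ u ∈ Icc (0:ℝ) 1, ∀ v ∈ Icc (0:ℝ) 1, 0 ≤ Λ u v)
    (hb : ∀ t ∈ Ioc 0 T, ∀ u ∈ Icc (0:ℝ) 1, 0 ≤ b t u ∧ b t u ≤ M)
    (hρ : ContinuousOn (uncurry ρ) (Icc 0 T ×ˢ Icc 0 1)) (hρ₀ : ∀ u ∈ Icc (0:ℝ) 1, 0 ≤ ρ 0 u)
    (hD : ∀ t ∈ Ioc 0 T, ∀ u ∈ Icc (0:ℝ) 1, HasDerivAt (ρ · u)
      (-ψ u * ρ t u + b t u * ∫ v in (0:ℝ)..1, Λ u v * ρ t v) t) :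
    ∀ t ∈ Icc 0 T, ∀ u ∈ Icc (0:ℝ) 1, 0 ≤ ρ t u := by
  obtain ⟨L, hL⟩ := (isCompact_Icc.prod isCompact_Icc).exists_bound_of_continuousOn hΛc
  refine nonneg_of_hasDerivAt_ge_mul_of_isMinOn (K := M * L) isCompact_Icc hρ hρ₀ hD
    fun t ht u hu hneg hmin => ?_
  have hΛL : ∀ v ∈ Icc (0:ℝ) 1, Λ u v ≤ L := fun v hv =>
    (le_abs_self _).trans (hL (u, v) ⟨hu, hv⟩)
  have hint : IntervalIntegrable (fun v => Λ u v * ρ t v) volume 0 1 :=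
    ContinuousOn.intervalIntegrable_of_Icc zero_le_one <|
      (hΛc.comp (Continuous.prodMk_right u).continuousOn fun v hv => ⟨hu, hv⟩).mul
        (hρ.comp (Continuous.prodMk_right t).continuousOn fun v hv => ⟨Ioc_subset_Icc_self ht, hv⟩)
  have hI : L * ρ t u ≤ ∫ v in (0:ℝ)..1, Λ u v * ρ t v := by
    have := intervalIntegral.integral_mono_on zero_le_one intervalIntegrable_const hint
      fun v hv => show L * ρ t u ≤ Λ u v * ρ t v by
        nlinarith [mul_le_mul_of_nonneg_left (isMinOn_iff.1 hmin v hv) (hΛ u hu v hv),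
          mul_le_mul_of_nonpos_right (hΛL v hv) hneg.le]
    simpa using this
  have hL₀ : 0 ≤ L := (hΛ u hu u hu).trans (hΛL u hu)
  obtain ⟨hb₀, hbM⟩ := hb t ht u hu
  nlinarith [mul_le_mul_of_nonneg_left hI hb₀, mul_le_mul_of_nonpos_right hbM
    (mul_nonpos_of_nonneg_of_nonpos hL₀ hneg.le), mul_nonneg (hψ u hu) (neg_nonneg.2 hneg.le)]

theorem stmt_5_general (ψ φ : ℝ → ℝ) (Λ : ℝ → ℝ → ℝ)
    (hψpos : ∀ u ∈ Icc (0:ℝ) 1, 0 < ψ u)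
    (hΛc : ContinuousOn (Function.uncurry Λ) (Icc 0 1 ×ˢ Icc 0 1))
    (hΛpos : ∀ u ∈ Icc (0:ℝ) 1, ∀ v ∈ Icc (0:ℝ) 1, 0 < Λ u v)
    (hφ : ∀ u ∈ Icc (0:ℝ) 1, 0 ≤ φ u ∧ φ u ≤ 1)
    (ρ₁ ρ₀ : ℝ → ℝ → ℝ)
    (hρ₁c : ContinuousOn (fun p : ℝ × ℝ => ρ₁ p.1 p.2) (Ici 0 ×ˢ Icc 0 1))
    (hρ₀c : ContinuousOn (fun p : ℝ × ℝ => ρ₀ p.1 p.2) (Ici 0 ×ˢ Icc 0 1))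
    (hode₁ : ∀ u ∈ Icc (0:ℝ) 1, ∀ t : ℝ, 0 ≤ t →
      HasDerivAt (fun s => ρ₁ s u)
        (-ψ u * ρ₁ t u + ρ₀ t u * ∫ v in (0:ℝ)..1, Λ u v * ρ₁ t v) t)
    (hode₀ : ∀ u ∈ Icc (0:ℝ) 1, ∀ t : ℝ, 0 ≤ t →
      HasDerivAt (fun s => ρ₀ s u)
        (-(ρ₀ t u) * ∫ v in (0:ℝ)..1, Λ u v * ρ₁ t v) t)
    (hinit₁ : ∀ u ∈ Icc (0:ℝ) 1, ρ₁ 0 u = φ u)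
    (hinit₀ : ∀ u ∈ Icc (0:ℝ) 1, ρ₀ 0 u = 1 - φ u) :
    ∀ t : ℝ, 0 ≤ t → ∀ u ∈ Icc (0:ℝ) 1,
      0 ≤ ρ₀ t u ∧ 0 ≤ ρ₁ t u ∧ ρ₀ t u + ρ₁ t u ≤ 1 := by
  intro T hT u hu
  have hsub : Icc 0 T ×ˢ Icc (0:ℝ) 1 ⊆ Ici 0 ×ˢ Icc 0 1 := prod_mono Icc_subset_Ici_self le_rfl
  obtain ⟨K, hK⟩ := exists_abs_integral_mul_le hΛc (hρ₁c.mono hsub)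
  have h₀ := nonneg_of_hasDerivAt_eq_neg_mul isCompact_Icc (hρ₀c.mono hsub)
    (fun u hu => by linarith [hinit₀ u hu, hφ u hu]) (fun t ht => hK t (Ioc_subset_Icc_self ht))
    fun t ht u hu => hode₀ u hu t ht.1.le
  obtain ⟨M, hM⟩ := (isCompact_Icc.prod isCompact_Icc).exists_bound_of_continuousOn
    (hρ₀c.mono hsub)
  have h₁ := nonneg_of_hasDerivAt_eq_neg_mul_add_mul_integral (M := M)
    (fun u hu => (hψpos u hu).le) hΛc (fun u hu v hv => (hΛpos u hu v hv).le)
    (fun t ht u hu => ⟨h₀ t (Ioc_subset_Icc_self ht) u hu,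
      (le_abs_self _).trans (hM (t, u) ⟨Ioc_subset_Icc_self ht, hu⟩)⟩)
    (hρ₁c.mono hsub) (fun u hu => (hinit₁ u hu).symm ▸ (hφ u hu).1)
    fun t ht u hu => hode₁ u hu t ht.1.le
  have hsum : ρ₀ T u + ρ₁ T u ≤ ρ₀ 0 u + ρ₁ 0 u :=
    antitoneOn_Icc_of_hasDerivAt_nonpos (f' := fun t => -ψ u * ρ₁ t u)
      (fun t ht => ((hode₀ u hu t ht.1).add (hode₁ u hu t ht.1)).congr_deriv (by ring))
      (fun t ht => by nlinarith [hψpos u hu, h₁ t (Ioo_subset_Icc_self ht) u hu])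
      ⟨le_rfl, hT⟩ ⟨hT, le_rfl⟩ hT
  refine ⟨h₀ T ⟨hT, le_rfl⟩ u hu, h₁ T ⟨hT, le_rfl⟩ u hu, ?_⟩
  linarith [hinit₀ u hu, hinit₁ u hu]

/-- Any solution of the SIR hydrodynamic ODE system
`dρ₁/dt = -ψ(u)ρ₁ + ρ₀ ∫₀¹ λ(u,v)ρ₁(t,v) dv`, `dρ₀/dt = -ρ₀ ∫₀¹ λ(u,v)ρ₁(t,v) dv`
with `ρ₁(0,·) = φ`, `ρ₀(0,·) = 1 - φ`, `0 ≤ φ ≤ 1`, satisfies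
`0 ≤ ρ₀, ρ₁` and `ρ₀ + ρ₁ ≤ 1` for all `t ≥ 0` and `u ∈ [0,1]`. -/
theorem stmt_5 (ψ φ : ℝ → ℝ) (Λ : ℝ → ℝ → ℝ)
    (hψc : ContinuousOn ψ (Icc 0 1)) (hψpos : ∀ u ∈ Icc (0:ℝ) 1, 0 < ψ u)
    (hΛc : ContinuousOn (Function.uncurry Λ) (Icc 0 1 ×ˢ Icc 0 1))
    (hΛpos : ∀ u ∈ Icc (0:ℝ) 1, ∀ v ∈ Icc (0:ℝ) 1, 0 < Λ u v)
    (hφc : ContinuousOn φ (Icc 0 1))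
    (hφ : ∀ u ∈ Icc (0:ℝ) 1, 0 ≤ φ u ∧ φ u ≤ 1)
    (ρ₁ ρ₀ : ℝ → ℝ → ℝ)
    (hρ₁c : ContinuousOn (fun p : ℝ × ℝ => ρ₁ p.1 p.2) (Ici 0 ×ˢ Icc 0 1))
    (hρ₀c : ContinuousOn (fun p : ℝ × ℝ => ρ₀ p.1 p.2) (Ici 0 ×ˢ Icc 0 1))
    (hode₁ : ∀ u ∈ Icc (0:ℝ) 1, ∀ t : ℝ, 0 ≤ t →
      HasDerivAt (fun s => ρ₁ s u)
        (-ψ u * ρ₁ t u + ρ₀ t u * ∫ v in (0:ℝ)..1, Λ u v * ρ₁ t v) t)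
    (hode₀ : ∀ u ∈ Icc (0:ℝ) 1, ∀ t : ℝ, 0 ≤ t →
      HasDerivAt (fun s => ρ₀ s u)
        (-(ρ₀ t u) * ∫ v in (0:ℝ)..1, Λ u v * ρ₁ t v) t)
    (hinit₁ : ∀ u ∈ Icc (0:ℝ) 1, ρ₁ 0 u = φ u)
    (hinit₀ : ∀ u ∈ Icc (0:ℝ) 1, ρ₀ 0 u = 1 - φ u) :
    ∀ t : ℝ, 0 ≤ t → ∀ u ∈ Icc (0:ℝ) 1,
      0 ≤ ρ₀ t u ∧ 0 ≤ ρ₁ t u ∧ ρ₀ t u + ρ₁ t u ≤ 1 :=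
  stmt_5_general ψ φ Λ hψpos hΛc hΛpos hφ ρ₁ ρ₀ hρ₁c hρ₀c hode₁ hode₀ hinit₁ hinit₀
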